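/- For all real x ≥ (ln π)/2 one has 1 + (ln π)/(2x) < R(x). Moreover R(x) < 1 + 0.9265/x for all x ≥ 1, R(x) < 1 + 0.5979/x for all x ≥ 10, and R(x) < 1 + 0.5749/x for all x ≥ 100. -/

import Mathlib

/-!
Writing `R x = exp (q x⁻¹)` with `q u = (log π / 2) u + u² / 12`, the lower bound is
`exp t ≥ 1 + t`. For the upper bounds, `u ↦ exp (q u)` is convex and equals `1` at `0`, so its
secant slope from `0`, which is `x (R x - 1)` at `u = x⁻¹`, decreases as `x` grows; it therefore
suffices to check `R b < 1 + a / b` at the left endpoint `b`, which is a Taylor estimate for `exp`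
once `log π < 1.14473`.
-/

open Real Set Finset

noncomputable def R (x : ℝ) : ℝ := Real.pi ^ (1 / (2 * x)) * Real.exp (1 / (12 * x ^ 2))

theorem R_eq_exp (x : ℝ) : R x = exp (log π / 2 * x⁻¹ + 1 / 12 * x⁻¹ ^ 2) := by
  rw [R, rpow_def_of_pos pi_pos, ← exp_add]
  congr 1
  ring

theorem log_pi_pos : 0 < log π :=
  log_pos (by linarith [pi_gt_three])

theorem log_pi_lt : log π < 1.14473 := by
  rw [log_lt_iff_lt_exp pi_pos]
  calc π < 3.141593 := pi_lt_d6
    _ ≤ ∑ i ∈ range 13, (1.14473 : ℝ) ^ i / i.factorial := by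
        simp only [sum_range_succ, sum_range_zero, Nat.factorial]
        norm_num
    _ ≤ exp 1.14473 := sum_le_exp_of_nonneg (by norm_num) 13

theorem one_add_log_pi_div_lt_R {x : ℝ} (hx : x ≠ 0) : 1 + log π / (2 * x) < R x := by
  have hsq : 0 < 1 / 12 * x⁻¹ ^ 2 := by positivity
  calc 1 + log π / (2 * x) < 1 + (log π / 2 * x⁻¹ + 1 / 12 * x⁻¹ ^ 2) := by
        have : log π / (2 * x) = log π / 2 * x⁻¹ := by ring
        linarith
    _ ≤ R x := by
        rw [R_eq_exp, add_comm 1]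
        exact add_one_le_exp _

theorem convexOn_exp_linear_add_sq (c : ℝ) {d : ℝ} (hd : 0 ≤ d) :
    ConvexOn ℝ univ fun u : ℝ ↦ exp (c * u + d * u ^ 2) := by
  have hq : ConvexOn ℝ univ fun u : ℝ ↦ c * u + d * u ^ 2 :=
    ((LinearMap.mul ℝ ℝ c).convexOn convex_univ).add (even_two.convexOn_pow.smul hd)
  refine ⟨convex_univ, fun u _ v _ s t hs ht hst ↦ ?_⟩
  calc exp (c * (s • u + t • v) + d * (s • u + t • v) ^ 2)
      ≤ exp (s • (c * u + d * u ^ 2) + t • (c * v + d * v ^ 2)) :=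
        exp_le_exp.2 (hq.2 (mem_univ u) (mem_univ v) hs ht hst)
    _ ≤ s • exp (c * u + d * u ^ 2) + t • exp (c * v + d * v ^ 2) :=
        convexOn_exp.2 (mem_univ _) (mem_univ _) hs ht hst

theorem antitoneOn_mul_R_sub_one : AntitoneOn (fun x ↦ x * (R x - 1)) (Ioi 0) := by
  intro b (hb : 0 < b) x (hx : 0 < x) hbx
  set g : ℝ → ℝ := fun u ↦ exp (log π / 2 * u + 1 / 12 * u ^ 2)
  have hsecant (y : ℝ) (hy : 0 < y) : y * (R y - 1) = (g y⁻¹ - g 0) / (y⁻¹ - 0) := by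
    simp only [g, R_eq_exp]
    field_simp
    simp
  show x * (R x - 1) ≤ b * (R b - 1)
  rw [hsecant x hx, hsecant b hb]
  exact (convexOn_exp_linear_add_sq _ (by norm_num)).secant_mono (mem_univ 0) (mem_univ _)
    (mem_univ _) (inv_ne_zero hx.ne') (inv_ne_zero hb.ne') (inv_anti₀ hb hbx)

theorem R_lt_one_add_div_of_le {a b x : ℝ} (hb : 0 < b) (hbx : b ≤ x) (hRb : R b < 1 + a / b) :
    R x < 1 + a / x := by
  have hx : 0 < x := hb.trans_le hbx
  have hb_slope : b * (R b - 1) < a := by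
    rw [← lt_div_iff₀' hb]
    linarith
  have hx_slope : R x - 1 < a / x := by
    rw [lt_div_iff₀' hx]
    exact (antitoneOn_mul_R_sub_one hb hx hbx).trans_lt hb_slope
  linarith

theorem R_lt_of_exp_bound {a b q : ℝ} {n : ℕ} (hb : 0 < b) (hn : 0 < n)
    (hq : 1.14473 / 2 * b⁻¹ + 1 / 12 * b⁻¹ ^ 2 ≤ q) (hq1 : q ≤ 1)
    (htaylor : ∑ m ∈ range n, q ^ m / m.factorial + q ^ n * (n + 1) / (n.factorial * n) < a) :
    R b < a := by
  have hexponent : log π / 2 * b⁻¹ + 1 / 12 * b⁻¹ ^ 2 ≤ q := by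
    refine le_trans ?_ hq
    gcongr
    exact log_pi_lt.le
  have hq0 : 0 ≤ q := le_trans (by have := log_pi_pos; positivity) hexponent
  calc R b ≤ exp q := by rw [R_eq_exp]; exact exp_le_exp.2 hexponent
    _ ≤ _ := exp_bound' hq0 hq1 hn
    _ < a := htaylor

/-- Corollary 1: `1 + (ln π)/(2x) < R(x)` for `x ≥ (ln π)/2`, and `R(x) < 1 + a/x`
for `(a, b) = (0.9265, 1), (0.5979, 10), (0.5749, 100)` and all `x ≥ b`. -/
theorem R_estimates :
    (∀ x : ℝ, Real.log Real.pi / 2 ≤ x → 1 + Real.log Real.pi / (2 * x) < R x) ∧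
    (∀ x : ℝ, 1 ≤ x → R x < 1 + 0.9265 / x) ∧
    (∀ x : ℝ, 10 ≤ x → R x < 1 + 0.5979 / x) ∧
    (∀ x : ℝ, 100 ≤ x → R x < 1 + 0.5749 / x) := by
  refine ⟨fun x hx ↦ one_add_log_pi_div_lt_R (by linarith [log_pi_pos]), fun x hx ↦ ?_,
    fun x hx ↦ ?_, fun x hx ↦ ?_⟩
  · refine R_lt_one_add_div_of_le one_pos hx (R_lt_of_exp_bound (q := 0.6557) (n := 8) one_pos
      (by norm_num) (by norm_num) (by norm_num) ?_)
    norm_num [sum_range_succ, Nat.factorial]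
  · refine R_lt_one_add_div_of_le (by norm_num) hx (R_lt_of_exp_bound (q := 0.05807) (n := 6)
      (by norm_num) (by norm_num) (by norm_num) (by norm_num) ?_)
    norm_num [sum_range_succ, Nat.factorial]
  · refine R_lt_one_add_div_of_le (by norm_num) hx (R_lt_of_exp_bound (q := 0.005732) (n := 5)
      (by norm_num) (by norm_num) (by norm_num) (by norm_num) ?_)
    norm_num [sum_range_succ, Nat.factorial]
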